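/- Fix integers m ≥ 2 and k with 1 ≤ k ≤ m. Then there is a bijection between the set of code words of length k over base dimension m and the set of increasing trees on the vertex set {0, 1, …, k}, where an increasing tree is a tree (connected acyclic graph) on {0, 1, …, k} in which every vertex v ≠ 0 has exactly one neighbor with a smaller label (equivalently, labels increase along every path moving away from the root 0). -/

import Mathlib

/-- A code word of length `k` over base dimension `m`: a sequence
`A 1, A 2, …, A k` of finite sets of integers, each contained in `{2, 3, …}`,
such that `A 1 = ∅`, for each `2 ≤ j ≤ k` we have `A j ⊆ A (j-1) ∪ {j}`,
and `|A j| ≤ m - 1` for all `j`.  (We normalize `A i = ∅` outside `1 ≤ i ≤ k`.) -/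
def IsCodeWord (m k : ℕ) (A : ℕ → Finset ℕ) : Prop :=
  A 1 = ∅ ∧
  (∀ i, 1 ≤ i → i ≤ k → ∀ x ∈ A i, 2 ≤ x) ∧
  (∀ j, 2 ≤ j → j ≤ k → A j ⊆ A (j - 1) ∪ {j}) ∧
  (∀ i, 1 ≤ i → i ≤ k → (A i).card ≤ m - 1) ∧
  (∀ i, i = 0 ∨ k < i → A i = ∅)

/-- `multCW k A j` is `n_j`: the number of indices `i` (with `1 ≤ i ≤ k`)
such that `j ∈ A i`. -/
def multCW (k : ℕ) (A : ℕ → Finset ℕ) (j : ℕ) : ℕ :=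
  ((Finset.Icc 1 k).filter (fun i => j ∈ A i)).card

/-- An increasing tree on the vertex set `{0, 1, …, k}` (as `Fin (k+1)`):
a tree in which every vertex `v ≠ 0` has exactly one neighbor with a smaller
label, i.e. labels increase along every path moving away from the root `0`. -/
def IsIncreasingTree {k : ℕ} (G : SimpleGraph (Fin (k + 1))) : Prop :=
  G.IsTree ∧ ∀ v : Fin (k + 1), v ≠ 0 → ∃! w : Fin (k + 1), G.Adj v w ∧ w < v


/-!
A code word is determined by the lifetimes `n_e = multCW k A e` of its elements: the sets
containing `e` are exactly `A e, A (e + 1), …, A (e + n_e - 1)`, and conversely every choice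
`0 ≤ n_e ≤ k + 1 - e` (for `2 ≤ e ≤ k`) gives a code word, because `|A i| ≤ i - 1 ≤ m - 1`
holds automatically. An increasing tree is determined by the parents of `1, …, k`, vertex `v`
having `v` possible parents; the unique-smaller-neighbour condition alone already forces a tree.
Both sides are therefore products of `1, 2, …, k` choices, matched by `e ↔ k + 2 - e`.
-/

open Finset

theorem Finset.eq_Ico_card_of_forall_mem {T : Finset ℕ} {e : ℕ} (hle : ∀ i ∈ T, e ≤ i)
    (hmem : ∀ i ∈ T, ∀ j, e ≤ j → j ≤ i → j ∈ T) : T = Ico e (e + #T) := by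
  rcases T.eq_empty_or_nonempty with rfl | hT
  · simp
  have hIcc : T = Icc e (T.max' hT) := by
    ext i
    simp only [mem_Icc]
    exact ⟨fun hi => ⟨hle i hi, T.le_max' i hi⟩,
      fun hi => hmem _ (T.max'_mem hT) i hi.1 hi.2⟩
  have hmax := hle _ (T.max'_mem hT)
  rw [hIcc, Nat.card_Icc]
  ext i
  simp only [mem_Icc, mem_Ico]
  omega

namespace IsCodeWord

variable {m k : ℕ} {A : ℕ → Finset ℕ} {i e : ℕ}

theorem index_mem_Icc (h : IsCodeWord m k A) (he : e ∈ A i) : i ∈ Icc 1 k := by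
  by_contra hi
  rw [h.2.2.2.2 i (by simp only [mem_Icc] at hi; omega)] at he
  exact notMem_empty e he

theorem two_le (h : IsCodeWord m k A) (he : e ∈ A i) : 2 ≤ e := by
  obtain ⟨hi1, hik⟩ := mem_Icc.mp (h.index_mem_Icc he)
  exact h.2.1 i hi1 hik e he

theorem mem_pred_of_mem (h : IsCodeWord m k A) (he : e ∈ A i) (hei : e ≠ i) : e ∈ A (i - 1) := by
  obtain ⟨hi1, hik⟩ := mem_Icc.mp (h.index_mem_Icc he)
  rcases hi1.eq_or_lt with rfl | hi
  · rw [h.1] at he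
    exact absurd he (notMem_empty e)
  · exact (mem_union.mp (h.2.2.1 i hi hik he)).resolve_right (by simpa using hei)

theorem le_index (h : IsCodeWord m k A) (he : e ∈ A i) : e ≤ i := by
  induction i with
  | zero => exact absurd (h.index_mem_Icc he) (by simp)
  | succ i ih =>
    by_contra hlt
    exact hlt ((ih (h.mem_pred_of_mem he (by omega))).trans i.le_succ)

theorem mem_of_le_of_mem (h : IsCodeWord m k A) (he : e ∈ A i) {j : ℕ} (hej : e ≤ j)
    (hji : j ≤ i) : e ∈ A j := by
  induction i with
  | zero => exact Nat.le_zero.mp hji ▸ he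
  | succ i ih =>
    rcases hji.eq_or_lt with rfl | hji
    · exact he
    · exact ih (h.mem_pred_of_mem he (by omega)) (by omega)

theorem mem_iff (h : IsCodeWord m k A) : e ∈ A i ↔ e ≤ i ∧ i < e + multCW k A e := by
  set T := (Icc 1 k).filter (fun i => e ∈ A i)
  have hT : ∀ {i}, i ∈ T ↔ e ∈ A i := fun {i} => by
    simp only [T, mem_filter, and_iff_right_iff_imp]
    exact h.index_mem_Icc
  have hrun : T = Ico e (e + #T) :=
    eq_Ico_card_of_forall_mem (fun i hi => h.le_index (hT.mp hi))
      fun i hi j hej hji => hT.mpr (h.mem_of_le_of_mem (hT.mp hi) hej hji)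
  rw [← hT, hrun, mem_Ico]
  rfl

theorem multCW_le (h : IsCodeWord m k A) (e : ℕ) : multCW k A e ≤ k + 1 - e := by
  calc multCW k A e ≤ #(Icc e k) := by
        refine card_le_card fun i hi => ?_
        obtain ⟨hi, he⟩ := mem_filter.mp hi
        exact mem_Icc.mpr ⟨h.le_index he, (mem_Icc.mp hi).2⟩
    _ = k + 1 - e := Nat.card_Icc e k

end IsCodeWord

def codeWordOfLifetimes (k : ℕ) (n : ℕ → ℕ) (i : ℕ) : Finset ℕ :=
  if i ≤ k then (Icc 2 i).filter (fun e => i < e + n e) else ∅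

section Lifetimes

variable {k : ℕ} {n n' : ℕ → ℕ}

theorem mem_codeWordOfLifetimes {i e : ℕ} :
    e ∈ codeWordOfLifetimes k n i ↔ i ≤ k ∧ 2 ≤ e ∧ e ≤ i ∧ i < e + n e := by
  unfold codeWordOfLifetimes
  split_ifs with hi <;> simp [hi, and_assoc]

theorem isCodeWord_codeWordOfLifetimes {m : ℕ} (hkm : k ≤ m) (n : ℕ → ℕ) :
    IsCodeWord m k (codeWordOfLifetimes k n) := by
  refine ⟨?_, ?_, ?_, fun i _ hik => ?_, ?_⟩
  · ext e
    simp only [mem_codeWordOfLifetimes, notMem_empty, iff_false]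
    omega
  · intro i _ _ e he
    exact (mem_codeWordOfLifetimes.mp he).2.1
  · intro j _ _ e he
    simp only [mem_union, mem_singleton, mem_codeWordOfLifetimes] at he ⊢
    omega
  · calc #(codeWordOfLifetimes k n i) ≤ #(Icc 2 i) := by
          refine card_le_card fun e he => ?_
          have := mem_codeWordOfLifetimes.mp he
          exact mem_Icc.mpr ⟨this.2.1, this.2.2.1⟩
      _ ≤ m - 1 := by rw [Nat.card_Icc]; omega
  · intro i hi
    ext e
    simp only [mem_codeWordOfLifetimes, notMem_empty, iff_false]
    omega

theorem codeWordOfLifetimes_congr (h : ∀ e, 2 ≤ e → e ≤ k → n e = n' e) :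
    codeWordOfLifetimes k n = codeWordOfLifetimes k n' := by
  ext i e
  simp only [mem_codeWordOfLifetimes]
  refine and_congr_right fun hik => and_congr_right fun he => and_congr_right fun hei => ?_
  rw [h e he (by omega)]

theorem multCW_codeWordOfLifetimes {e : ℕ} (he : 2 ≤ e) (hn : n e ≤ k + 1 - e) :
    multCW k (codeWordOfLifetimes k n) e = n e := by
  have hrun : (Icc 1 k).filter (fun i => e ∈ codeWordOfLifetimes k n i) = Ico e (e + n e) := by
    ext i
    simp only [mem_filter, mem_Icc, mem_Ico, mem_codeWordOfLifetimes]
    omega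
  rw [multCW, hrun, Nat.card_Ico]
  omega

theorem IsCodeWord.eq_codeWordOfLifetimes {m : ℕ} {A : ℕ → Finset ℕ} (h : IsCodeWord m k A) :
    A = codeWordOfLifetimes k (multCW k A) := by
  ext i e
  rw [mem_codeWordOfLifetimes]
  constructor
  · intro he
    exact ⟨(mem_Icc.mp (h.index_mem_Icc he)).2, h.two_le he, h.mem_iff.mp he⟩
  · rintro ⟨-, -, hlife⟩
    exact h.mem_iff.mpr hlife

end Lifetimes

namespace SimpleGraph

variable {V : Type*} {G : SimpleGraph V}

theorem ext_of_adj_of_lt [LinearOrder V] {H : SimpleGraph V}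
    (h : ∀ a b, b < a → (G.Adj a b ↔ H.Adj a b)) : G = H := by
  ext a b
  rcases lt_trichotomy a b with hab | rfl | hab
  · rw [G.adj_comm, H.adj_comm]
    exact h b a hab
  · simp
  · exact h a b hab

theorem connected_of_exists_adj_lt [Preorder V] [WellFoundedLT V] [OrderBot V]
    (h : ∀ v, v ≠ ⊥ → ∃ w, G.Adj v w ∧ w < v) : G.Connected := by
  have hreach : ∀ v, G.Reachable v ⊥ := fun v => by
    induction v using WellFoundedLT.induction with
    | _ v ih =>
      by_cases hv : v = ⊥
      · rw [hv]
      obtain ⟨w, hvw, hwv⟩ := h v hv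
      exact hvw.reachable.trans (ih w hwv)
  exact ⟨fun u v => (hreach u).trans (hreach v).symm⟩

theorem isAcyclic_of_adj_lt_unique [LinearOrder V]
    (h : ∀ v w w', G.Adj v w → w < v → G.Adj v w' → w' < v → w = w') : G.IsAcyclic := by
  classical
  intro u c hc
  -- the largest vertex of a cycle has two distinct neighbours on it, both smaller
  obtain ⟨M, hM, hmax⟩ := c.support.toFinset.exists_max_image id ⟨u, by simp⟩
  rw [List.mem_toFinset] at hM
  set c' := c.rotate M hM
  have hc' : c'.IsCycle := hc.rotate hM
  have hlt : ∀ {x}, x ∈ c'.support → G.Adj M x → x < M := fun hx hadj =>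
    lt_of_le_of_ne (hmax _ (List.mem_toFinset.mpr ((c.mem_support_rotate_iff M hM).mp hx)))
      hadj.ne'
  exact hc'.snd_ne_penultimate <|
    h M _ _ (c'.adj_snd hc'.not_nil) (hlt (c'.getVert_mem_support 1) (c'.adj_snd hc'.not_nil))
      (c'.adj_penultimate hc'.not_nil).symm
      (hlt (c'.getVert_mem_support _) (c'.adj_penultimate hc'.not_nil).symm)

theorem isTree_of_existsUnique_adj_lt [LinearOrder V] [WellFoundedLT V] [OrderBot V]
    (h : ∀ v, v ≠ ⊥ → ∃! w, G.Adj v w ∧ w < v) : G.IsTree := by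
  refine ⟨connected_of_exists_adj_lt fun v hv => (h v hv).exists,
    isAcyclic_of_adj_lt_unique fun v w w' hw hwv hw' hw'v => ?_⟩
  have hv : v ≠ ⊥ := (bot_le.trans_lt hwv).ne'
  exact (h v hv).unique ⟨hw, hwv⟩ ⟨hw', hw'v⟩

end SimpleGraph

section IncreasingTree

variable {k : ℕ}

theorem isIncreasingTree_iff {G : SimpleGraph (Fin (k + 1))} :
    IsIncreasingTree G ↔ ∀ v : Fin (k + 1), v ≠ 0 → ∃! w, G.Adj v w ∧ w < v :=
  ⟨And.right, fun h => ⟨SimpleGraph.isTree_of_existsUnique_adj_lt h, h⟩⟩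

theorem Fin.castLE_lt_succ {v : Fin k} (q : Fin (v + 1)) :
    q.castLE (Nat.succ_le_succ v.isLt.le) < v.succ := by
  rw [Fin.lt_def, Fin.val_castLE, Fin.val_succ]
  exact q.isLt

def parentGraph (p : ∀ v : Fin k, Fin (v + 1)) : SimpleGraph (Fin (k + 1)) :=
  SimpleGraph.fromRel fun a b => ∃ v, a = Fin.succ v ∧ (b : ℕ) = p v

theorem parentGraph_adj_of_lt {p : ∀ v : Fin k, Fin (v + 1)} {a b : Fin (k + 1)} (hba : b < a) :
    (parentGraph p).Adj a b ↔ ∃ v, a = Fin.succ v ∧ (b : ℕ) = p v := by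
  simp only [parentGraph, SimpleGraph.fromRel_adj, hba.ne', ne_eq, not_false_eq_true, true_and,
    or_iff_left_iff_imp]
  rintro ⟨v, rfl, hb⟩
  have := (p v).isLt
  rw [Fin.lt_def, Fin.val_succ] at hba
  omega

theorem isIncreasingTree_parentGraph (p : ∀ v : Fin k, Fin (v + 1)) :
    IsIncreasingTree (parentGraph p) := by
  refine isIncreasingTree_iff.mpr fun a ha => ?_
  obtain ⟨v, rfl⟩ := Fin.exists_succ_eq.mpr ha
  have hlt := Fin.castLE_lt_succ (p v)
  refine ⟨_, ⟨(parentGraph_adj_of_lt hlt).mpr ⟨v, rfl, rfl⟩, hlt⟩, ?_⟩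
  rintro w ⟨hw, hwv⟩
  obtain ⟨v', hv', hw'⟩ := (parentGraph_adj_of_lt hwv).mp hw
  obtain rfl := Fin.succ_injective _ hv'
  exact Fin.ext hw'

namespace IsIncreasingTree

variable {G : SimpleGraph (Fin (k + 1))}

/-- The label of the parent of vertex `v + 1`. -/
noncomputable def parent (hG : IsIncreasingTree G) (v : Fin k) : Fin (v + 1) :=
  ⟨(hG.2 v.succ v.succ_ne_zero).choose,
    by simpa [Fin.lt_def] using (hG.2 v.succ v.succ_ne_zero).choose_spec.1.2⟩

theorem adj_succ_iff (hG : IsIncreasingTree G) {v : Fin k} {w : Fin (k + 1)} (hw : w < v.succ) :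
    G.Adj v.succ w ↔ (w : ℕ) = hG.parent v := by
  obtain ⟨hchoose, huniq⟩ := (hG.2 v.succ v.succ_ne_zero).choose_spec
  refine ⟨fun hadj => congrArg Fin.val (huniq w ⟨hadj, hw⟩), fun hwp => ?_⟩
  rw [show w = (hG.2 v.succ v.succ_ne_zero).choose from Fin.ext hwp]
  exact hchoose.1

end IsIncreasingTree

noncomputable def increasingTreeEquivParents (k : ℕ) :
    {G : SimpleGraph (Fin (k + 1)) | IsIncreasingTree G} ≃ ∀ v : Fin k, Fin (v + 1) where
  toFun G := G.2.parent
  invFun p := ⟨parentGraph p, isIncreasingTree_parentGraph p⟩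
  left_inv G := Subtype.ext <| SimpleGraph.ext_of_adj_of_lt fun a b hba => by
    obtain ⟨v, rfl⟩ := Fin.exists_succ_eq.mpr (Fin.pos_iff_ne_zero.mp (b.zero_le.trans_lt hba))
    rw [parentGraph_adj_of_lt hba, G.2.adj_succ_iff hba]
    simp
  right_inv p := funext fun v => by
    have hG := isIncreasingTree_parentGraph p
    have hlt := Fin.castLE_lt_succ (hG.parent v)
    obtain ⟨v', hv', hv'p⟩ := (parentGraph_adj_of_lt hlt).mp ((hG.adj_succ_iff hlt).mpr rfl)
    obtain rfl := Fin.succ_injective _ hv'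
    exact Fin.ext hv'p

end IncreasingTree

/-- Component `j` is the lifetime `n_{j+2}` of the element `j + 2`. -/
noncomputable def codeWordEquivLifetimes {m k : ℕ} (hkm : k ≤ m) :
    {A : ℕ → Finset ℕ | IsCodeWord m k A} ≃ ∀ j : Fin k, Fin (k - j) where
  toFun A j := ⟨multCW k A (j + 2), by have := A.2.multCW_le (j + 2); omega⟩
  invFun d := ⟨codeWordOfLifetimes k fun e => if h : e - 2 < k then d ⟨e - 2, h⟩ else 0,
    isCodeWord_codeWordOfLifetimes hkm _⟩
  left_inv A := Subtype.ext <| Eq.symm <| A.2.eq_codeWordOfLifetimes.trans <|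
    codeWordOfLifetimes_congr fun e he hek => by
      simp only [dif_pos (show e - 2 < k by omega), Nat.sub_add_cancel he]
  right_inv d := funext fun j => Fin.ext <| by
    have hdj := (d j).isLt
    dsimp only
    rw [multCW_codeWordOfLifetimes (by omega) (by simp; omega)]
    simp only [dif_pos (show (j : ℕ) + 2 - 2 < k by omega)]
    rfl

theorem codeWords_equiv_increasingTrees_general (m k : ℕ) (hkm : k ≤ m) :
    Nonempty ({A : ℕ → Finset ℕ | IsCodeWord m k A} ≃
      {G : SimpleGraph (Fin (k + 1)) | IsIncreasingTree G}) :=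
  -- element `j + 2` of a code word corresponds to vertex `k - j` of a tree
  ⟨(codeWordEquivLifetimes hkm).trans <|
    (Equiv.piCongr Fin.revPerm fun j => finCongr (by simp; omega)).trans
      (increasingTreeEquivParents k).symm⟩

/-- For `1 ≤ k ≤ m`, there is a bijection between the set of code words of
length `k` over base dimension `m` and the set of increasing trees on the
vertex set `{0, 1, …, k}`. -/
theorem codeWords_equiv_increasingTrees (m k : ℕ) (hm : 2 ≤ m) (hk1 : 1 ≤ k)
    (hkm : k ≤ m) :
    Nonempty ({A : ℕ → Finset ℕ | IsCodeWord m k A} ≃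
      {G : SimpleGraph (Fin (k + 1)) | IsIncreasingTree G}) :=
  codeWords_equiv_increasingTrees_general m k hkm
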